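/- arXiv:0905.1155 — 4 statements merged into one kernel-verified Lean document; each statement's English description precedes it below -/
import Mathlib

section
/- Let 1 < q < n be coprime, n/q = [α_1,…,α_N] with i-series i_0=n, i_1=q, i_{t+1}=α_t i_t − i_{t−1}, and n/(n−q) = [a_2,…,a_{e−1}]. Define the r-series by r_2 = a_2(n−q) − q, r_3 = r_2 − (n−q), r_4 = (a_3+1)r_3 − r_2, and r_j = a_{j−1}r_{j−1} − r_{j−2} for 5 ≤ j ≤ e, and set l_j = 2 + Σ_{p=1}^j (α_p − 2). Let ν be the number of leading 2's in [α_1,…,α_N] (i.e. α_1=⋯=α_ν=2, α_{ν+1} ≥ 3, or ν = N when all α_p = 2). Then r_{l_t} = i_t − i_{t+1} for all ν+1 ≤ t ≤ N. -/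
/-!
The remainders of a Jung–Hirzebruch expansion with entries `≥ 2` strictly decrease to `0`, so
each one is the least non-negative residue of minus the one two places earlier, modulo the one
in between. The remainder sequence of `n / (n - q)` is `n, n - q, r 3, r 4, …`. Along the leading
2's the i-series is the arithmetic progression `n - u (n - q)`, so this sequence starts with
`i ν - i (ν + 1) = n - q`, preceded by `n ≡ i (ν + 1)`. Whenever a remainder equals
`i u - i (u + 1)` and its predecessor is `≡ i (u + 1)` modulo it, the next `α (u + 1) - 2`
remainders go down by `i (u + 1)`, ending at `i (u + 1) - i (u + 2)` with predecessor
`≡ i (u + 1) ≡ i (u + 2)`; the position advances by `α (u + 1) - 2`, which is how `l` arises.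
-/

/-- The Jung–Hirzebruch negative continued fraction. -/
def ncf : List ℤ → ℚ
  | [] => 0
  | a :: l => (a : ℚ) - (ncf l)⁻¹

lemma one_lt_ncf : ∀ {L : List ℤ}, (∀ b ∈ L, 2 ≤ b) → L ≠ [] → 1 < ncf L
  | [], _, h => absurd rfl h
  | [c], hL, _ => by
    have hc : (2 : ℚ) ≤ c := by exact_mod_cast hL c (by simp)
    simp only [ncf, inv_zero, sub_zero]
    linarith
  | c :: d :: L, hL, _ => by
    have hc : (2 : ℚ) ≤ c := by exact_mod_cast hL c (by simp)
    have ht : 1 < ncf (d :: L) :=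
      one_lt_ncf (fun b hb => hL b (List.mem_cons_of_mem c hb)) (List.cons_ne_nil d L)
    have hinv : (ncf (d :: L))⁻¹ < 1 := inv_lt_one_of_one_lt₀ ht
    show 1 < (c : ℚ) - (ncf (d :: L))⁻¹
    linarith

lemma ncf_tail_eq_div {c x y z : ℤ} {L : List ℤ} (hL : ∀ b ∈ L, 2 ≤ b) (hL0 : L ≠ [])
    (hy : 0 < y) (hz : z = c * y - x) (h : ncf (c :: L) = x / y) :
    0 < z ∧ z < y ∧ ncf L = y / z := by
  have hL1 := one_lt_ncf hL hL0
  have hyQ : (0 : ℚ) < y := by exact_mod_cast hy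
  have hinv : (ncf L)⁻¹ = z / y := by
    have h' : (c : ℚ) - (ncf L)⁻¹ = x / y := h
    rw [hz]
    push_cast
    field_simp at h' ⊢
    linarith
  have hz0 : (0 : ℚ) < z / y := hinv ▸ inv_pos.2 (by linarith)
  have hz1 : (z : ℚ) / y < 1 := hinv ▸ inv_lt_one_of_one_lt₀ hL1
  refine ⟨?_, ?_, by rw [← inv_inv (ncf L), hinv, inv_div]⟩
  · exact_mod_cast (div_pos_iff_of_pos_right hyQ).1 hz0
  · exact_mod_cast (div_lt_one hyQ).1 hz1

lemma eq_sub_of_modEq {d c y z : ℤ} (hz : z ≡ -y [ZMOD d]) (hy : y ≡ c [ZMOD d])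
    (hz0 : 0 ≤ z) (hzd : z < d) (hc : 0 < c) (hcd : c ≤ d) : z = d - c := by
  have h : z ≡ d - c [ZMOD d] :=
    (hz.trans hy.neg).trans (Int.modEq_iff_dvd.2 ⟨1, by ring⟩)
  rw [← Int.emod_eq_of_lt hz0 hzd, ← Int.emod_eq_of_lt (by omega) (by omega : d - c < d)]
  exact h

structure IsRemainderSeq (x : ℕ → ℤ) (M : ℕ) : Prop where
  modEq : ∀ m < M, x (m + 2) ≡ -x m [ZMOD x (m + 1)]
  nonneg : ∀ m ≤ M, 0 ≤ x (m + 1)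
  lt : ∀ m ≤ M, x (m + 1) < x m
  last : x (M + 1) = 0

namespace IsRemainderSeq

variable {x : ℕ → ℤ} {M : ℕ}

lemma pos (hx : IsRemainderSeq x M) {m : ℕ} (hm : m ≤ M) : 0 < x m :=
  (hx.nonneg m hm).trans_lt (hx.lt m hm)

lemma le_of_pos (hx : IsRemainderSeq x M) {m : ℕ} (hm : m ≤ M + 1) (hpos : 0 < x m) : m ≤ M := by
  rcases hm.lt_or_eq with hm | rfl
  · omega
  · exact absurd hx.last hpos.ne'

lemma cons (hx : IsRemainderSeq (fun m => x (m + 1)) M) (h1 : 0 ≤ x 1) (h10 : x 1 < x 0)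
    (h2 : x 2 ≡ -x 0 [ZMOD x 1]) : IsRemainderSeq x (M + 1) where
  modEq
    | 0, _ => h2
    | m + 1, hm => hx.modEq m (by omega)
  nonneg
    | 0, _ => h1
    | m + 1, hm => hx.nonneg m (by omega)
  lt
    | 0, _ => h10
    | m + 1, hm => hx.lt m (by omega)
  last := hx.last

lemma apply_add_eq_sub_mul (hx : IsRemainderSeq x M) {p : ℕ} {c : ℤ} (hpM : p + 1 ≤ M)
    (hc : 0 < c) (hp : x p ≡ c [ZMOD x (p + 1)]) :
    ∀ s : ℕ, 0 < x (p + 1) - s * c →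
      p + s + 1 ≤ M ∧ x (p + s + 1) = x (p + 1) - s * c ∧ x (p + s) ≡ c [ZMOD x (p + s + 1)]
  | 0, _ => by simpa using ⟨hpM, hp⟩
  | s + 1, hs => by
    obtain ⟨hM, hval, hmod⟩ := hx.apply_add_eq_sub_mul hpM hc hp s (by push_cast at hs; nlinarith)
    have hnext : x (p + s + 2) = x (p + 1) - (s + 1 : ℕ) * c := by
      rw [eq_sub_of_modEq (hx.modEq (p + s) (by omega)) hmod (hx.nonneg _ hM) (hx.lt _ hM) hc
        (by push_cast at hs; linarith), hval]
      push_cast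
      ring
    refine ⟨hx.le_of_pos (by omega) (hnext ▸ hs), hnext, Int.modEq_iff_dvd.2 ⟨-1, ?_⟩⟩
    show c - x (p + s + 1) = x (p + s + 2) * -1
    rw [hnext, hval]
    push_cast
    ring

end IsRemainderSeq

lemma isRemainderSeq_of_ncf : ∀ (L : List ℤ) (x : ℕ → ℤ), (∀ b ∈ L, 2 ≤ b) →
    (∀ t (ht : t < L.length), x (t + 2) = L[t] * x (t + 1) - x t) →
    0 < x 1 → x 1 < x 0 → ncf L = x 0 / x 1 → IsRemainderSeq x L.length
  | [], x, _, _, h1, h10, h => by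
    have : (0 : ℚ) < x 0 / x 1 := div_pos (by exact_mod_cast h1.trans h10) (by exact_mod_cast h1)
    linarith [show (0 : ℚ) = x 0 / x 1 from h]
  | c :: L, x, hL, hrec, h1, h10, h => by
    have hx2 : x 2 = c * x 1 - x 0 := hrec 0 (by simp)
    have h2 : x 2 ≡ -x 0 [ZMOD x 1] := Int.modEq_iff_dvd.2 ⟨-c, by rw [hx2]; ring⟩
    refine IsRemainderSeq.cons ?_ h1.le h10 h2
    rcases eq_or_ne L [] with rfl | hL0
    · have hc : (c : ℚ) = x 0 / x 1 := by simpa [ncf] using h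
      have hlast : x 2 = 0 := by
        have hc' : (c : ℚ) * x 1 = x 0 := by
          rw [hc, div_mul_cancel₀ _ (by exact_mod_cast h1.ne')]
        rw [hx2]
        exact_mod_cast sub_eq_zero.2 hc'
      refine ⟨fun m hm => absurd hm (Nat.not_lt_zero m), fun m hm => ?_, fun m hm => ?_, hlast⟩
      all_goals obtain rfl : m = 0 := by simpa using hm
      · exact hlast.ge
      · rw [hlast]; exact h1
    · obtain ⟨hz0, hz1, hncf⟩ := ncf_tail_eq_div (fun b hb => hL b (.tail c hb)) hL0 h1 hx2 h
      exact isRemainderSeq_of_ncf L (fun m => x (m + 1)) (fun b hb => hL b (.tail c hb))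
        (fun t ht => hrec (t + 1) (by simpa using ht)) hz0 hz1 hncf

lemma isRemainderSeq_of_ncf_ofFn {β x : ℕ → ℤ} {M : ℕ} (hβ : ∀ t, 1 ≤ t → t ≤ M → 2 ≤ β t)
    (hrec : ∀ t, 1 ≤ t → t ≤ M → x (t + 1) = β t * x t - x (t - 1))
    (h1 : 0 < x 1) (h10 : x 1 < x 0)
    (h : ncf (List.ofFn fun j : Fin M => β (j + 1)) = x 0 / x 1) : IsRemainderSeq x M := by
  have hL : ∀ b ∈ List.ofFn (fun j : Fin M => β (j + 1)), 2 ≤ b := by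
    simp only [List.mem_ofFn, forall_exists_index, forall_apply_eq_imp_iff]
    exact fun j => hβ _ (by omega) j.isLt
  simpa using isRemainderSeq_of_ncf _ x hL
    (fun t ht => by simpa using hrec (t + 1) (by omega) (by simpa using ht)) h1 h10 h

lemma IsRemainderSeq.exists_eq_sub_of_dual {x i α : ℕ → ℤ} {M N ν : ℕ} {l : ℕ → ℕ}
    (hx : IsRemainderSeq x M) (hi : IsRemainderSeq i N)
    (hirec : ∀ t, 1 ≤ t → t ≤ N → i (t + 1) = α t * i t - i (t - 1))
    (hα : ∀ t, 1 ≤ t → t ≤ N → 2 ≤ α t) (hl : ∀ u, (l (u + 1) : ℤ) = l u + (α (u + 1) - 2))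
    (hlν : l ν = 2) (hx1 : x 1 = i ν - i (ν + 1)) (hx0 : x 0 ≡ i (ν + 1) [ZMOD x 1]) :
    ∀ u, ν ≤ u → u ≤ N → ∃ p, l u = p + 2 ∧ p + 1 ≤ M ∧ x (p + 1) = i u - i (u + 1) ∧
      x p ≡ i (u + 1) [ZMOD x (p + 1)] := by
  intro u hνu
  induction u, hνu using Nat.le_induction with
  | base =>
    intro hνN
    have hpos : 0 < x 1 := by rw [hx1]; linarith [hi.lt ν hνN]
    exact ⟨0, hlν, hx.le_of_pos (by omega) hpos, hx1, hx0⟩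
  | succ u hνu ih =>
    intro huN
    obtain ⟨p, hp, hpM, hxp, hmod⟩ := ih (by omega)
    obtain ⟨s, hs⟩ := Int.eq_ofNat_of_zero_le (sub_nonneg.2 (hα (u + 1) (by omega) huN))
    have hrec : i (u + 2) = α (u + 1) * i (u + 1) - i u := hirec (u + 1) (by omega) huN
    have hdiff : x (p + 1) - s * i (u + 1) = i (u + 1) - i (u + 2) := by
      rw [hxp, ← hs, hrec]
      ring
    have hpos : 0 < i (u + 1) - i (u + 2) := sub_pos.2 (hi.lt (u + 1) huN)
    obtain ⟨hM, hval, hmod'⟩ := hx.apply_add_eq_sub_mul hpM (hi.pos huN) hmod s (hdiff ▸ hpos)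
    refine ⟨p + s, by have := hl u; omega, hM, hval.trans hdiff, ?_⟩
    have hstep : i (u + 1) ≡ i (u + 2) [ZMOD x (p + s + 1)] :=
      Int.modEq_iff_dvd.2 ⟨-1, by rw [hval, hdiff]; ring⟩
    exact hmod'.trans hstep

lemma eq_sub_mul_of_coeff_eq_two {i α : ℕ → ℤ} {ν : ℕ}
    (hrec : ∀ t, 1 ≤ t → t ≤ ν → i (t + 1) = α t * i t - i (t - 1))
    (h2 : ∀ t, 1 ≤ t → t ≤ ν → α t = 2) : ∀ u ≤ ν + 1, i u = i 0 - u * (i 0 - i 1)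
  | 0, _ => by simp
  | 1, _ => by simp
  | u + 2, hu => by
    have h : i (u + 2) = α (u + 1) * i (u + 1) - i u := hrec (u + 1) (by omega) (by omega)
    rw [h2 (u + 1) (by omega) (by omega)] at h
    rw [h, eq_sub_mul_of_coeff_eq_two hrec h2 (u + 1) (by omega),
      eq_sub_mul_of_coeff_eq_two hrec h2 u (by omega)]
    push_cast
    ring

/-- The remainder sequence of `n / (n - q)`, read off the r-series. -/
def dualRem (n q : ℤ) (r : ℕ → ℤ) : ℕ → ℤ
  | 0 => n
  | 1 => n - q
  | m + 2 => r (m + 3)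

lemma dualRem_rec {n q : ℤ} {e : ℕ} {a r : ℕ → ℤ} (hr2 : r 2 = a 2 * (n - q) - q)
    (hr3 : r 3 = r 2 - (n - q)) (hr4 : r 4 = (a 3 + 1) * r 3 - r 2)
    (hrrec : ∀ j, 5 ≤ j → j ≤ e → r j = a (j - 1) * r (j - 1) - r (j - 2)) :
    ∀ t, 1 ≤ t → t ≤ e - 2 →
      dualRem n q r (t + 1) = a (t + 1) * dualRem n q r t - dualRem n q r (t - 1)
  | 1, _, _ => show r 3 = a 2 * (n - q) - n by rw [hr3, hr2]; ring
  | 2, _, _ => show r 4 = a 3 * r 3 - (n - q) by rw [hr4, hr3]; ring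
  | t + 3, _, ht => hrrec (t + 5) (by omega) (by omega)

lemma le_sum_Icc_sub_two {α : ℕ → ℤ} {N s t : ℕ} (hα : ∀ t, 1 ≤ t → t ≤ N → 2 ≤ α t)
    (hs : 1 ≤ s) (hst : s ≤ t) (htN : t ≤ N) : α s - 2 ≤ ∑ p ∈ Finset.Icc 1 t, (α p - 2) :=
  Finset.single_le_sum (f := fun p => α p - 2) (fun p hp => sub_nonneg.2
    (hα p (Finset.mem_Icc.1 hp).1 ((Finset.mem_Icc.1 hp).2.trans htN))) (Finset.mem_Icc.2 ⟨hs, hst⟩)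

theorem stmt10_general (n q : ℤ) (hq : 1 < q) (hn : q < n)
    (N : ℕ) (α : ℕ → ℤ) (hαb : ∀ t, 1 ≤ t → t ≤ N → 2 ≤ α t)
    (hncf : ncf (List.ofFn (fun j : Fin N => α (j + 1))) = (n : ℚ) / (q : ℚ))
    (e : ℕ) (a : ℕ → ℤ) (hab : ∀ j, 2 ≤ j → j ≤ e - 1 → 2 ≤ a j)
    (hancf : ncf (List.ofFn (fun j : Fin (e - 2) => a (j + 2))) =
      (n : ℚ) / ((n : ℚ) - (q : ℚ)))
    (i : ℕ → ℤ) (hi0 : i 0 = n) (hi1 : i 1 = q)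
    (hirec : ∀ t, 1 ≤ t → t ≤ N → i (t + 1) = α t * i t - i (t - 1))
    (r : ℕ → ℤ) (hr2 : r 2 = a 2 * (n - q) - q) (hr3 : r 3 = r 2 - (n - q))
    (hr4 : r 4 = (a 3 + 1) * r 3 - r 2)
    (hrrec : ∀ j, 5 ≤ j → j ≤ e → r j = a (j - 1) * r (j - 1) - r (j - 2))
    (l : ℕ → ℕ) (hl : ∀ j, (l j : ℤ) = 2 + ∑ p ∈ Finset.Icc 1 j, (α p - 2))
    (ν : ℕ) (hν2 : ∀ t, 1 ≤ t → t ≤ ν → α t = 2)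
    (hν3 : ν = N ∨ 3 ≤ α (ν + 1)) :
    ∀ t, ν + 1 ≤ t → t ≤ N → r (l t) = i t - i (t + 1) := by
  intro t hνt htN
  have hi : IsRemainderSeq i N := isRemainderSeq_of_ncf_ofFn hαb hirec (by omega) (by omega)
    (by rw [hi0, hi1]; exact hncf)
  have hx : IsRemainderSeq (dualRem n q r) (e - 2) :=
    isRemainderSeq_of_ncf_ofFn (β := fun t => a (t + 1))
      (fun t h1 h2 => hab (t + 1) (by omega) (by omega)) (dualRem_rec hr2 hr3 hr4 hrrec)
      (show 0 < n - q by omega) (show n - q < n by omega) (by simpa [dualRem] using hancf)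
  have hlin := eq_sub_mul_of_coeff_eq_two (fun t h1 h2 => hirec t h1 (by omega)) hν2
  have hlν : l ν = 2 := by
    have hsum : ∑ p ∈ Finset.Icc 1 ν, (α p - 2) = 0 := Finset.sum_eq_zero fun p hp => by
      rw [hν2 p (Finset.mem_Icc.1 hp).1 (Finset.mem_Icc.1 hp).2, sub_self]
    have := hl ν
    omega
  have hlstep (u : ℕ) : (l (u + 1) : ℤ) = l u + (α (u + 1) - 2) := by
    rw [hl, hl, Finset.sum_Icc_succ_top (by omega)]
    ring
  have hl3 : 3 ≤ l t := by
    have := le_sum_Icc_sub_two hαb (by omega) hνt htN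
    have := hl t
    have := hν3.resolve_left (by omega)
    omega
  obtain ⟨p, hp, -, hxp, -⟩ := hx.exists_eq_sub_of_dual hi hirec hαb hlstep hlν
    (show n - q = _ by rw [hlin ν (by omega), hlin (ν + 1) le_rfl, hi0, hi1]; push_cast; ring)
    (show n ≡ _ [ZMOD n - q] from Int.modEq_iff_dvd.2 ⟨-(ν + 1), by
      rw [hlin (ν + 1) le_rfl, hi0, hi1]; push_cast; ring⟩) t (by omega) htN
  obtain ⟨p, rfl⟩ : ∃ p', p = p' + 1 := ⟨p - 1, by omega⟩
  rw [hp]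
  exact hxp

theorem stmt10 (n q : ℤ) (hq : 1 < q) (hn : q < n) (hcop : IsCoprime n q)
    (N : ℕ) (hN : 1 ≤ N) (α : ℕ → ℤ) (hαb : ∀ t, 1 ≤ t → t ≤ N → 2 ≤ α t)
    (hncf : ncf (List.ofFn (fun j : Fin N => α (j + 1))) = (n : ℚ) / (q : ℚ))
    (e : ℕ) (he : 3 ≤ e) (a : ℕ → ℤ) (hab : ∀ j, 2 ≤ j → j ≤ e - 1 → 2 ≤ a j)
    (hancf : ncf (List.ofFn (fun j : Fin (e - 2) => a (j + 2))) =
      (n : ℚ) / ((n : ℚ) - (q : ℚ)))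
    (i : ℕ → ℤ) (hi0 : i 0 = n) (hi1 : i 1 = q)
    (hirec : ∀ t, 1 ≤ t → t ≤ N → i (t + 1) = α t * i t - i (t - 1))
    (r : ℕ → ℤ) (hr2 : r 2 = a 2 * (n - q) - q) (hr3 : r 3 = r 2 - (n - q))
    (hr4 : r 4 = (a 3 + 1) * r 3 - r 2)
    (hrrec : ∀ j, 5 ≤ j → j ≤ e → r j = a (j - 1) * r (j - 1) - r (j - 2))
    (l : ℕ → ℕ) (hl : ∀ j, (l j : ℤ) = 2 + ∑ p ∈ Finset.Icc 1 j, (α p - 2))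
    (ν : ℕ) (hνN : ν ≤ N) (hν2 : ∀ t, 1 ≤ t → t ≤ ν → α t = 2)
    (hν3 : ν = N ∨ 3 ≤ α (ν + 1)) :
    ∀ t, ν + 1 ≤ t → t ≤ N → r (l t) = i t - i (t + 1) :=
  stmt10_general n q hq hn N α hαb hncf e a hab hancf i hi0 hi1 hirec r hr2 hr3 hr4 hrrec l hl ν hν2
    hν3
end

section
/- Let 1 < q < n be coprime, n/q = [α_1,…,α_N] with i-series i_0=n, i_1=q, i_{t+1}=α_t i_t − i_{t−1}, dual expansion n/(n−q) = [a_2,…,a_{e−1}], and r-series r_2 = a_2(n−q) − q, r_3 = r_2 − (n−q), r_4 = (a_3+1)r_3 − r_2, r_j = a_{j−1}r_{j−1} − r_{j−2} for 5 ≤ j ≤ e. Set l_N = 2 + Σ_{p=1}^N (α_p−2) and define the b-series by: b_0 = 1, b_{l_N − 1} = N, and for 1 ≤ t ≤ l_N − 2, b_t is the smallest integer 1 ≤ b_t ≤ N with t ≤ Σ_{p=1}^{b_t}(α_p − 2). Then r_{t+1} = r_{t+2} + i_{b_t} for all 2 ≤ t ≤ e−2. In particular r_{t+1} > r_{t+2}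 for all 2 ≤ t ≤ e−2. -/
theorem eq_of_linear_recurrence {x y c : ℕ → ℤ} {k₀ K : ℕ} (h₀ : x k₀ = y k₀)
    (h₁ : x (k₀ + 1) = y (k₀ + 1))
    (hx : ∀ k, k₀ ≤ k → k + 2 ≤ K → x (k + 2) = c k * x (k + 1) - x k)
    (hy : ∀ k, k₀ ≤ k → k + 2 ≤ K → y (k + 2) = c k * y (k + 1) - y k) :
    ∀ k, k₀ ≤ k → k ≤ K → x k = y k := by
  intro k hk hkK
  induction k using Nat.strong_induction_on with
  | _ k ih =>
    obtain rfl | rfl | hk := (by omega : k = k₀ ∨ k = k₀ + 1 ∨ k₀ + 2 ≤ k)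
    · exact h₀
    · exact h₁
    obtain ⟨k, rfl⟩ : ∃ m, k = m + 2 := ⟨k - 2, by omega⟩
    rw [hx k (by omega) hkK, hy k (by omega) hkK, ih k (by omega) (by omega) (by omega),
      ih (k + 1) (by omega) (by omega) (by omega)]

theorem ncf_cons (a : ℤ) (l : List ℤ) : ncf (a :: l) = a - (ncf l)⁻¹ := rfl

theorem ncf_ofFn_succ (A : ℕ → ℤ) (M : ℕ) :
    ncf (List.ofFn fun j : Fin (M + 1) => A j) =
      A 0 - (ncf (List.ofFn fun j : Fin M => A (j + 1)))⁻¹ := by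
  rw [List.ofFn_succ, ncf_cons]
  rfl

theorem one_lt_ncf_cons {a : ℤ} {l : List ℤ} (h : ∀ x ∈ a :: l, 2 ≤ x) : 1 < ncf (a :: l) := by
  induction l generalizing a with
  | nil => simp only [ncf, inv_zero, sub_zero]; exact_mod_cast one_lt_two.trans_le (h a (by simp))
  | cons c l ih =>
    obtain ⟨ha, hl⟩ := List.forall_mem_cons.1 h
    have ha' : (2 : ℚ) ≤ a := by exact_mod_cast ha
    rw [ncf_cons]
    linarith [inv_lt_one_of_one_lt₀ (ih hl)]

theorem one_lt_ncf_s11 {l : List ℤ} (hl : ∀ x ∈ l, 2 ≤ x) (hne : l ≠ []) : 1 < ncf l := by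
  cases l with
  | nil => exact absurd rfl hne
  | cons a l => exact one_lt_ncf_cons hl

theorem inv_ncf_mem_Ico {l : List ℤ} (hl : ∀ x ∈ l, 2 ≤ x) : (ncf l)⁻¹ ∈ Set.Ico 0 1 := by
  cases l with
  | nil => simp [ncf]
  | cons a l =>
    have h := one_lt_ncf_cons hl
    exact ⟨inv_nonneg.2 (zero_le_one.trans h.le), inv_lt_one_of_one_lt₀ h⟩

theorem ceil_ncf_cons {a : ℤ} {l : List ℤ} (hl : ∀ x ∈ l, 2 ≤ x) : ⌈ncf (a :: l)⌉ = a := by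
  obtain ⟨h₀, h₁⟩ := inv_ncf_mem_Ico hl
  rw [Int.ceil_eq_iff, ncf_cons]
  constructor <;> linarith

theorem eq_of_ncf_eq {l₁ l₂ : List ℤ} (h₁ : ∀ x ∈ l₁, 2 ≤ x) (h₂ : ∀ x ∈ l₂, 2 ≤ x)
    (h : ncf l₁ = ncf l₂) : l₁ = l₂ := by
  induction l₁ generalizing l₂ with
  | nil =>
    cases l₂ with
    | nil => rfl
    | cons y l₂ =>
      have h₂ := one_lt_ncf_cons h₂
      rw [← h, ncf] at h₂
      norm_num at h₂
  | cons x l₁ ih =>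
    cases l₂ with
    | nil =>
      have h₁ := one_lt_ncf_cons h₁
      rw [h, ncf] at h₁
      norm_num at h₁
    | cons y l₂ =>
      rw [List.forall_mem_cons] at h₁ h₂
      obtain rfl : x = y := by rw [← ceil_ncf_cons (a := x) h₁.2, h, ceil_ncf_cons h₂.2]
      rw [ncf_cons, ncf_cons, sub_right_inj, inv_inj] at h
      rw [ih h₁.2 h₂.2 h]

theorem eq_of_ncf_ofFn_eq {m k : ℕ} {f g : ℕ → ℤ} (hf : ∀ j < m, 2 ≤ f j)
    (hg : ∀ j < k, 2 ≤ g j)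
    (h : ncf (List.ofFn fun j : Fin m => f j) = ncf (List.ofFn fun j : Fin k => g j)) :
    m = k ∧ ∀ j < m, f j = g j := by
  have hl := eq_of_ncf_eq (List.forall_mem_ofFn_iff.2 fun j => hf j j.2)
    (List.forall_mem_ofFn_iff.2 fun j => hg j j.2) h
  have hmk : m = k := by simpa using congrArg List.length hl
  refine ⟨hmk, fun j hj => ?_⟩
  simpa [List.getElem?_ofFn, hj, ← hmk] using congrArg (·[j]?) hl

theorem ncf_ofFn_eq_div {M : ℕ} {u A : ℕ → ℤ}
    (hrec : ∀ j < M, u (j + 2) = A j * u (j + 1) - u j)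
    (hne : ∀ j, 1 ≤ j → j ≤ M → u j ≠ 0) (hlast : u (M + 1) = 0) :
    ncf (List.ofFn fun j : Fin M => A j) = u 0 / u 1 := by
  induction M generalizing u A with
  | zero => simp [ncf, hlast]
  | succ M ih =>
    have h1 : (u 1 : ℚ) ≠ 0 := by exact_mod_cast hne 1 le_rfl (by omega)
    have h2 : (u 2 : ℚ) = A 0 * u 1 - u 0 := by exact_mod_cast hrec 0 (by omega)
    rw [ncf_ofFn_succ, ih (u := fun j => u (j + 1)) (fun j hj => hrec (j + 1) (by omega))
      (fun j hj hj' => hne (j + 1) (by omega) (by omega)) hlast, inv_div, h2]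
    field_simp
    ring

theorem pos_and_eq_zero_of_ncf_ofFn_eq_div {M : ℕ} {u A : ℕ → ℤ} (hM : 1 ≤ M)
    (hA : ∀ j < M, 2 ≤ A j) (hrec : ∀ j < M, u (j + 2) = A j * u (j + 1) - u j)
    (h1 : 0 < u 1) (h : ncf (List.ofFn fun j : Fin M => A j) = u 0 / u 1) :
    (∀ j, 1 ≤ j → j ≤ M → 0 < u j) ∧ u (M + 1) = 0 := by
  have h1' : (u 1 : ℚ) ≠ 0 := by exact_mod_cast h1.ne'
  induction M, hM using Nat.le_induction generalizing u A with
  | base =>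
    have h0 : (u 0 : ℚ) = A 0 * u 1 := by
      rw [ncf_ofFn_succ, eq_comm, div_eq_iff h1'] at h
      simpa [ncf] using h
    refine ⟨fun j hj hj' => (show j = 1 by omega) ▸ h1, ?_⟩
    have : (u 2 : ℚ) = 0 := by push_cast [hrec 0 one_pos, h0]; ring
    exact_mod_cast this
  | succ M hM ih =>
    rw [ncf_ofFn_succ, eq_comm, div_eq_iff h1'] at h
    set T := ncf (List.ofFn fun j : Fin M => A (j + 1)) with hT_def
    have hT : 1 < T := one_lt_ncf_s11 (List.forall_mem_ofFn_iff.2 fun j => hA (j + 1) (by omega))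
      (by rw [Ne, List.ofFn_eq_nil_iff]; omega)
    have h2 : (u 2 : ℚ) = T⁻¹ * u 1 := by
      push_cast [hrec 0 (by omega)]
      linear_combination -h
    have h2pos : 0 < u 2 := by
      have : (0 : ℚ) < u 2 := h2 ▸ mul_pos (inv_pos.2 (one_pos.trans hT)) (by exact_mod_cast h1)
      exact_mod_cast this
    have h2' : (u 2 : ℚ) ≠ 0 := by exact_mod_cast h2pos.ne'
    obtain ⟨hpos, hlast⟩ := ih (u := fun j => u (j + 1)) (fun j hj => hA (j + 1) (by omega))
      (fun j hj => hrec (j + 1) (by omega)) h2pos (by rw [← hT_def, h2]; field_simp) h2'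
    refine ⟨fun j hj hj' => ?_, hlast⟩
    obtain rfl | hj := eq_or_lt_of_le hj
    · exact h1
    · simpa [Nat.sub_add_cancel hj.le] using hpos (j - 1) (by omega) (by omega)

section Series

variable {α i : ℕ → ℤ} {N : ℕ}

/-- `excess α m = l_m - 2` in the paper's notation. -/
def excess (α : ℕ → ℤ) (m : ℕ) : ℤ := ∑ p ∈ Finset.Icc 1 m, (α p - 2)

theorem excess_zero : excess α 0 = 0 := by simp [excess]

theorem excess_succ (m : ℕ) : excess α (m + 1) = excess α m + (α (m + 1) - 2) :=
  Finset.sum_Icc_succ_top (by omega) _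

theorem excess_mono (hα : ∀ t, 1 ≤ t → t ≤ N → 2 ≤ α t) {m m' : ℕ} (hm : m ≤ m') (hm' : m' ≤ N) :
    excess α m ≤ excess α m' :=
  Finset.sum_le_sum_of_subset_of_nonneg (Finset.Icc_subset_Icc_right hm) fun p hp _ => by
    have := hα p (Finset.mem_Icc.1 hp).1 ((Finset.mem_Icc.1 hp).2.trans hm')
    omega

theorem excess_nonneg (hα : ∀ t, 1 ≤ t → t ≤ N → 2 ≤ α t) {m : ℕ} (hm : m ≤ N) :
    0 ≤ excess α m :=
  excess_zero (α := α) ▸ excess_mono hα (Nat.zero_le m) hm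

def dualLine (α i : ℕ → ℤ) (d : ℕ) (t : ℤ) : ℤ := i (d - 1) - (t - excess α (d - 1)) * i d

theorem dualLine_sub_dualLine_add_one (d : ℕ) (t : ℤ) :
    dualLine α i d t - dualLine α i d (t + 1) = i d := by
  unfold dualLine; ring

theorem dualLine_succ_excess_add_one (d : ℕ) :
    dualLine α i (d + 1) (excess α d + 1) = i d - i (d + 1) := by
  simp only [dualLine, Nat.add_sub_cancel]; ring

theorem dualLine_excess_add_one (hrec : ∀ t, 1 ≤ t → t ≤ N → i (t + 1) = α t * i t - i (t - 1))
    {d : ℕ} (hd : 1 ≤ d) (hdN : d ≤ N) :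
    dualLine α i d (excess α d + 1) = i d - i (d + 1) := by
  obtain ⟨d, rfl⟩ : ∃ d', d = d' + 1 := ⟨d - 1, by omega⟩
  have := hrec (d + 1) hd hdN
  simp only [dualLine, Nat.add_sub_cancel, excess_succ] at this ⊢
  linear_combination this

theorem dualLine_eq_of_flat (hrec : ∀ t, 1 ≤ t → t ≤ N → i (t + 1) = α t * i t - i (t - 1))
    {c d : ℕ} {T : ℤ} (hc : 1 ≤ c) (hcd : c ≤ d) (hd : d ≤ N + 1)
    (hflat : ∀ j, c ≤ j → j < d → excess α j = T) :
    dualLine α i c (T + 1) = dualLine α i d (T + 1) := by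
  induction d, hcd using Nat.le_induction with
  | base => rfl
  | succ d hcd ih =>
    rw [ih (by omega) fun j hj hj' => hflat j hj (by omega), ← hflat d hcd (by omega),
      dualLine_excess_add_one hrec (by omega) (by omega), dualLine_succ_excess_add_one]

theorem sub_eq_mul_dualLine_of_flat
    (hrec : ∀ t, 1 ≤ t → t ≤ N → i (t + 1) = α t * i t - i (t - 1))
    {c d : ℕ} {T : ℤ} (hc : 1 ≤ c) (hcd : c ≤ d) (hd : d ≤ N + 1)
    (hflat : ∀ j, c ≤ j → j < d → excess α j = T) :
    i c - i d = (d - c) * dualLine α i d (T + 1) := by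
  induction d, hcd using Nat.le_induction with
  | base => simp
  | succ d hcd ih =>
    have hT := hflat d hcd (by omega)
    have h₁ := dualLine_excess_add_one hrec (α := α) (hc.trans hcd) (by omega : d ≤ N)
    have h₂ := dualLine_succ_excess_add_one (α := α) (i := i) d
    rw [hT] at h₁ h₂
    have ih := ih (by omega) fun j hj hj' => hflat j hj (by omega)
    rw [h₁] at ih
    rw [h₂]
    push_cast
    linear_combination ih

/-- The paper's `b`-series `b_0, …, b_M`, where `M = l_N - 1`. -/
structure IsBSeries (α : ℕ → ℤ) (N M : ℕ) (b : ℕ → ℕ) : Prop where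
  length_eq : (M : ℤ) = excess α N + 1
  zero : b 0 = 1
  top : b M = N
  mem : ∀ t ≤ M, 1 ≤ b t ∧ b t ≤ N
  le_excess : ∀ t, 0 < t → t < M → (t : ℤ) ≤ excess α (b t)
  excess_pred_lt : ∀ t, 0 < t → t < M → excess α (b t - 1) < t

namespace IsBSeries

theorem of_minimal {L : ℕ} {b : ℕ → ℕ} (hN : 1 ≤ N) (hα : ∀ t, 1 ≤ t → t ≤ N → 2 ≤ α t)
    (hL : (L : ℤ) = 2 + excess α N) (hb0 : b 0 = 1) (hbL : b (L - 1) = N)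
    (hb : ∀ t, 1 ≤ t → t ≤ L - 2 → 1 ≤ b t ∧ b t ≤ N ∧ (t : ℤ) ≤ excess α (b t) ∧
      ∀ m, 1 ≤ m → m ≤ N → (t : ℤ) ≤ excess α m → b t ≤ m) :
    IsBSeries α N (L - 1) b := by
  have hL2 : 2 ≤ L := by have := excess_nonneg hα le_rfl; omega
  refine ⟨by omega, hb0, hbL, fun t ht => ?_, fun t ht₀ ht => (hb t ht₀ (by omega)).2.2.1,
    fun t ht₀ ht => ?_⟩
  · rcases Nat.eq_zero_or_pos t with rfl | ht₀
    · exact ⟨hb0.ge, hb0 ▸ hN⟩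
    rcases eq_or_lt_of_le ht with rfl | ht
    · exact ⟨hbL ▸ hN, hbL.le⟩
    exact ⟨(hb t ht₀ (by omega)).1, (hb t ht₀ (by omega)).2.1⟩
  · obtain ⟨hb₁, hbN, -, hmin⟩ := hb t ht₀ (by omega)
    by_contra! h
    rcases eq_or_lt_of_le hb₁ with h₁ | h₁
    · rw [← h₁, excess_zero] at h
      omega
    · have := hmin (b t - 1) (by omega) (by omega) h
      omega

variable {M : ℕ} {b : ℕ → ℕ}

theorem le_succ (hb : IsBSeries α N M b) (hα : ∀ t, 1 ≤ t → t ≤ N → 2 ≤ α t) {t : ℕ}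
    (ht : t < M) : b t ≤ b (t + 1) := by
  rcases Nat.eq_zero_or_pos t with rfl | ht₀
  · rw [hb.zero]; exact (hb.mem 1 ht).1
  rcases eq_or_lt_of_le (show t + 1 ≤ M from ht) with htM | htM
  · rw [htM, hb.top]; exact (hb.mem t ht.le).2
  by_contra! h
  have h₁ := hb.le_excess (t + 1) (by omega) htM
  have h₂ := hb.excess_pred_lt t ht₀ ht
  have h₃ := excess_mono hα (by omega : b (t + 1) ≤ b t - 1) (by have := (hb.mem t ht.le).2; omega)
  push_cast at h₁
  omega

theorem excess_eq (hb : IsBSeries α N M b) (hα : ∀ t, 1 ≤ t → t ≤ N → 2 ≤ α t) {t j : ℕ}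
    (ht : t < M) (hj : b t ≤ j) (hj' : j < b (t + 1)) : excess α j = t := by
  have hbN := (hb.mem (t + 1) ht).2
  have hjN : j < N := hj'.trans_le hbN
  have hlow : (t : ℤ) ≤ excess α j := by
    rcases Nat.eq_zero_or_pos t with rfl | ht₀
    · exact excess_nonneg hα hjN.le
    · exact (hb.le_excess t ht₀ ht).trans (excess_mono hα hj hjN.le)
  have hup : excess α j < t + 1 := by
    rcases eq_or_lt_of_le (show t + 1 ≤ M from ht) with htM | htM
    · have := excess_mono hα (by omega : j ≤ N) le_rfl
      have := hb.length_eq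
      rw [← htM] at this
      push_cast at this
      omega
    · have := hb.excess_pred_lt (t + 1) (by omega) htM
      have := excess_mono hα (by omega : j ≤ b (t + 1) - 1) (by omega)
      push_cast at *
      omega
  omega

end IsBSeries

/-- The `i`-series of `n / (n - q)`, i.e. the paper's `r_{t+1}` for `t ≥ 2`. Through `min t M`
its value at `M + 1` is `L_N(M + 1) = 0`. -/
def dualISeries (α i : ℕ → ℤ) (b : ℕ → ℕ) (M t : ℕ) : ℤ := dualLine α i (b (min t M)) t

section DualISeries

variable {M : ℕ} {b : ℕ → ℕ}

theorem dualISeries_zero (hb : IsBSeries α N M b) : dualISeries α i b M 0 = i 0 := by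
  simp [dualISeries, dualLine, hb.zero, excess_zero]

theorem dualISeries_sub_succ (hα : ∀ t, 1 ≤ t → t ≤ N → 2 ≤ α t)
    (hrec : ∀ t, 1 ≤ t → t ≤ N → i (t + 1) = α t * i t - i (t - 1)) (hb : IsBSeries α N M b)
    {t : ℕ} (ht : t ≤ M) : dualISeries α i b M t - dualISeries α i b M (t + 1) = i (b t) := by
  have h := dualLine_sub_dualLine_add_one (α := α) (i := i) (b t) t
  rcases eq_or_lt_of_le ht with rfl | ht
  · simpa [dualISeries] using h
  · rw [dualISeries, dualISeries, min_eq_left ht.le, min_eq_left ht, ← h, Nat.cast_succ,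
      dualLine_eq_of_flat hrec (hb.mem t ht.le).1 (hb.le_succ hα ht)
        (by linarith [(hb.mem (t + 1) ht).2])
        fun j hj hj' => hb.excess_eq hα ht hj hj']

theorem dualISeries_succ_top (hrec : ∀ t, 1 ≤ t → t ≤ N → i (t + 1) = α t * i t - i (t - 1))
    (hb : IsBSeries α N M b) (hlast : i (N + 1) = 0) : dualISeries α i b M (M + 1) = 0 := by
  have hN := (hb.mem M le_rfl).1
  rw [hb.top] at hN
  obtain ⟨N, rfl⟩ : ∃ N', N = N' + 1 := ⟨N - 1, by omega⟩
  have h := hrec (N + 1) hN le_rfl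
  rw [Nat.add_sub_cancel] at h
  simp only [dualISeries, dualLine, min_eq_right (Nat.le_succ M), hb.top, Nat.add_sub_cancel]
  push_cast [hb.length_eq, excess_succ]
  linear_combination h - hlast

theorem dualISeries_pos (hα : ∀ t, 1 ≤ t → t ≤ N → 2 ≤ α t)
    (hrec : ∀ t, 1 ≤ t → t ≤ N → i (t + 1) = α t * i t - i (t - 1)) (hb : IsBSeries α N M b)
    (hpos : ∀ j, 1 ≤ j → j ≤ N → 0 < i j) (hlast : i (N + 1) = 0) {t : ℕ} (ht : t ≤ M) :
    0 < dualISeries α i b M t := by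
  have hstep : ∀ k ≤ M, 0 ≤ dualISeries α i b M (k + 1) → 0 < dualISeries α i b M k :=
    fun k hk h => by
      linarith [dualISeries_sub_succ hα hrec hb hk, hpos (b k) (hb.mem k hk).1 (hb.mem k hk).2]
  exact Nat.decreasingInduction (motive := fun k _ => 0 < dualISeries α i b M k)
    (fun k hk ih => hstep k hk.le ih.le) (hstep M le_rfl (dualISeries_succ_top hrec hb hlast).ge) ht

theorem dualISeries_one (hα : ∀ t, 1 ≤ t → t ≤ N → 2 ≤ α t)
    (hrec : ∀ t, 1 ≤ t → t ≤ N → i (t + 1) = α t * i t - i (t - 1)) (hb : IsBSeries α N M b) :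
    dualISeries α i b M 1 = i 0 - i 1 := by
  have := dualISeries_sub_succ hα hrec hb (Nat.zero_le M)
  rw [dualISeries_zero hb, hb.zero] at this
  linarith

theorem dualISeries_add_two (hα : ∀ t, 1 ≤ t → t ≤ N → 2 ≤ α t)
    (hrec : ∀ t, 1 ≤ t → t ≤ N → i (t + 1) = α t * i t - i (t - 1)) (hb : IsBSeries α N M b)
    {t : ℕ} (ht : t + 1 ≤ M) :
    dualISeries α i b M (t + 2) =
      (2 + b (t + 1) - b t) * dualISeries α i b M (t + 1) - dualISeries α i b M t := by
  have h₀ := dualISeries_sub_succ hα hrec hb (t := t) (by omega)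
  have h₁ := dualISeries_sub_succ hα hrec hb ht
  have hflat := sub_eq_mul_dualLine_of_flat hrec (hb.mem t (by omega)).1 (hb.le_succ hα ht)
    (by linarith [(hb.mem (t + 1) ht).2]) fun j hj hj' => hb.excess_eq hα ht hj hj'
  have hu : dualISeries α i b M (t + 1) = dualLine α i (b (t + 1)) (t + 1) := by
    rw [dualISeries, min_eq_left ht, Nat.cast_succ]
  rw [← hu] at hflat
  linear_combination h₀ - h₁ + hflat

theorem ncf_bSeries_eq_div (hα : ∀ t, 1 ≤ t → t ≤ N → 2 ≤ α t)
    (hrec : ∀ t, 1 ≤ t → t ≤ N → i (t + 1) = α t * i t - i (t - 1)) (hb : IsBSeries α N M b)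
    (hpos : ∀ j, 1 ≤ j → j ≤ N → 0 < i j) (hlast : i (N + 1) = 0) :
    ncf (List.ofFn fun j : Fin M => 2 + (b (j + 1) : ℤ) - b j) = i 0 / (i 0 - i 1) := by
  rw [ncf_ofFn_eq_div (u := dualISeries α i b M) (fun j hj => dualISeries_add_two hα hrec hb hj)
    (fun j _ hj => (dualISeries_pos hα hrec hb hpos hlast hj).ne')
    (dualISeries_succ_top hrec hb hlast), dualISeries_zero hb, dualISeries_one hα hrec hb]
  push_cast
  rfl

end DualISeries

end Series

theorem rSeries_eq {n q : ℤ} {M : ℕ} {a r u : ℕ → ℤ} (hM : 2 ≤ M) (hu0 : u 0 = n)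
    (hu1 : u 1 = n - q) (hu : ∀ k, k + 1 ≤ M → u (k + 2) = a (k + 2) * u (k + 1) - u k)
    (hr2 : r 2 = a 2 * (n - q) - q) (hr3 : r 3 = r 2 - (n - q))
    (hr4 : r 4 = (a 3 + 1) * r 3 - r 2)
    (hrrec : ∀ j, 5 ≤ j → j ≤ M + 2 → r j = a (j - 1) * r (j - 1) - r (j - 2)) :
    ∀ k, 2 ≤ k → k ≤ M + 1 → r (k + 1) = u k := by
  refine eq_of_linear_recurrence (x := fun k => r (k + 1)) (c := fun k => a (k + 2)) ?_ ?_
    (fun k hk hkM => hrrec (k + 3) (by omega) (by omega)) (fun k _ hkM => hu k (by omega))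
  · show r 3 = u 2
    rw [hr3, hr2, hu 0 (by omega), hu0, hu1]
    ring
  · show r 4 = u 3
    rw [hr4, hu 1 hM, hr3, hr2, hu 0 (by omega), hu0, hu1]
    ring

theorem stmt11_general (n q : ℤ) (hq : 1 < q)
    (N : ℕ) (hN : 1 ≤ N) (α : ℕ → ℤ) (hαb : ∀ t, 1 ≤ t → t ≤ N → 2 ≤ α t)
    (hncf : ncf (List.ofFn (fun j : Fin N => α (j + 1))) = (n : ℚ) / (q : ℚ))
    (e : ℕ) (a : ℕ → ℤ) (hab : ∀ j, 2 ≤ j → j ≤ e - 1 → 2 ≤ a j)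
    (hancf : ncf (List.ofFn (fun j : Fin (e - 2) => a (j + 2))) =
      (n : ℚ) / ((n : ℚ) - (q : ℚ)))
    (i : ℕ → ℤ) (hi0 : i 0 = n) (hi1 : i 1 = q)
    (hirec : ∀ t, 1 ≤ t → t ≤ N → i (t + 1) = α t * i t - i (t - 1))
    (r : ℕ → ℤ) (hr2 : r 2 = a 2 * (n - q) - q) (hr3 : r 3 = r 2 - (n - q))
    (hr4 : r 4 = (a 3 + 1) * r 3 - r 2)
    (hrrec : ∀ j, 5 ≤ j → j ≤ e → r j = a (j - 1) * r (j - 1) - r (j - 2))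
    (l : ℕ → ℕ) (hl : ∀ j, (l j : ℤ) = 2 + ∑ p ∈ Finset.Icc 1 j, (α p - 2))
    (b : ℕ → ℕ) (hb0 : b 0 = 1) (hblN : b (l N - 1) = N)
    (hb : ∀ t, 1 ≤ t → t ≤ l N - 2 →
      1 ≤ b t ∧ b t ≤ N ∧ (t : ℤ) ≤ ∑ p ∈ Finset.Icc 1 (b t), (α p - 2) ∧
        ∀ m, 1 ≤ m → m ≤ N → (t : ℤ) ≤ ∑ p ∈ Finset.Icc 1 m, (α p - 2) → b t ≤ m) :
    ∀ t, 2 ≤ t → t ≤ e - 2 →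
      r (t + 1) = r (t + 2) + i (b t) ∧ r (t + 2) < r (t + 1) := by
  intro t ht hte
  obtain ⟨hipos, hilast⟩ := pos_and_eq_zero_of_ncf_ofFn_eq_div (u := i) (A := fun j => α (j + 1))
    hN (fun j _ => hαb (j + 1) (by omega) (by omega))
    (fun j _ => by simpa using hirec (j + 1) (by omega) (by omega)) (by omega)
    (by rw [hncf, hi0, hi1])
  have hB : IsBSeries α N (l N - 1) b := IsBSeries.of_minimal hN hαb (hl N) hb0 hblN hb
  set M := l N - 1
  obtain ⟨hlen, ha⟩ := eq_of_ncf_ofFn_eq (m := e - 2) (k := M) (f := fun j => a (j + 2))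
    (g := fun j => 2 + (b (j + 1) : ℤ) - b j) (fun j _ => hab _ (by omega) (by omega))
    (fun j hj => by have := hB.le_succ hαb hj; omega)
    (by rw [hancf, ncf_bSeries_eq_div hαb hirec hB hipos hilast, hi0, hi1])
  obtain rfl : e = M + 2 := by omega
  have hru := rSeries_eq (u := dualISeries α i b M) (by omega) (hi0 ▸ dualISeries_zero hB)
    (hi0 ▸ hi1 ▸ dualISeries_one hαb hirec hB)
    (fun k hk => ha k (by omega) ▸ dualISeries_add_two hαb hirec hB hk) hr2 hr3 hr4 hrrec
  have hstep := dualISeries_sub_succ hαb hirec hB (t := t) (by omega)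
  have hi := hipos (b t) (hB.mem t (by omega)).1 (hB.mem t (by omega)).2
  rw [hru t ht (by omega), hru (t + 1) (by omega) (by omega)]
  constructor <;> linarith

theorem stmt11 (n q : ℤ) (hq : 1 < q) (hn : q < n) (hcop : IsCoprime n q)
    (N : ℕ) (hN : 1 ≤ N) (α : ℕ → ℤ) (hαb : ∀ t, 1 ≤ t → t ≤ N → 2 ≤ α t)
    (hncf : ncf (List.ofFn (fun j : Fin N => α (j + 1))) = (n : ℚ) / (q : ℚ))
    (e : ℕ) (he : 3 ≤ e) (a : ℕ → ℤ) (hab : ∀ j, 2 ≤ j → j ≤ e - 1 → 2 ≤ a j)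
    (hancf : ncf (List.ofFn (fun j : Fin (e - 2) => a (j + 2))) =
      (n : ℚ) / ((n : ℚ) - (q : ℚ)))
    (i : ℕ → ℤ) (hi0 : i 0 = n) (hi1 : i 1 = q)
    (hirec : ∀ t, 1 ≤ t → t ≤ N → i (t + 1) = α t * i t - i (t - 1))
    (r : ℕ → ℤ) (hr2 : r 2 = a 2 * (n - q) - q) (hr3 : r 3 = r 2 - (n - q))
    (hr4 : r 4 = (a 3 + 1) * r 3 - r 2)
    (hrrec : ∀ j, 5 ≤ j → j ≤ e → r j = a (j - 1) * r (j - 1) - r (j - 2))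
    (l : ℕ → ℕ) (hl : ∀ j, (l j : ℤ) = 2 + ∑ p ∈ Finset.Icc 1 j, (α p - 2))
    (b : ℕ → ℕ) (hb0 : b 0 = 1) (hblN : b (l N - 1) = N)
    (hb : ∀ t, 1 ≤ t → t ≤ l N - 2 →
      1 ≤ b t ∧ b t ≤ N ∧ (t : ℤ) ≤ ∑ p ∈ Finset.Icc 1 (b t), (α p - 2) ∧
        ∀ m, 1 ≤ m → m ≤ N → (t : ℤ) ≤ ∑ p ∈ Finset.Icc 1 m, (α p - 2) → b t ≤ m) :
    ∀ t, 2 ≤ t → t ≤ e - 2 →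
      r (t + 1) = r (t + 2) + i (b t) ∧ r (t + 2) < r (t + 1) :=
  stmt11_general n q hq N hN α hαb hncf e a hab hancf i hi0 hi1 hirec r hr2 hr3 hr4 hrrec l hl b hb0
    hblN hb
end

section
/- Let 1 < q < n be coprime integers with n−q odd, and let 𝔻_{n,q} ≤ GL(2,ℂ) be the subgroup generated by ψ_{2q} = diag(ε, ε^{−1}) with ε a primitive (2q)-th root of unity, τ = [[0, i],[i, 0]], and φ = diag(ω, ω) with ω a primitive (2(n−q))-th root of unity. Then 𝔻_{n,q} is a finite group of order 4(n−q)q. -/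
/-!
`ψ` and `τ` satisfy the defining relations of the dicyclic group `QuaternionGroup q` (of order
`4q`), and `φ` is a central scalar matrix of order `2(n - q)`, so `𝔻_{n,q}` is the image of
`⟨φ⟩ × QuaternionGroup q`. The kernel consists of the pairs `(s⁻¹, g)` where `s ∈ ⟨φ⟩` is the
image of `g`. The only scalars in the image of `QuaternionGroup q` are `±1` (`ψ ^ j` is scalar
iff `ε ^ j = ε⁻¹ ^ j`, i.e. `j ∈ {0, q}`, and `τ ψ ^ j` has zero diagonal), and
`-1 = ψ ^ q = φ ^ (n - q)`, so the kernel has order 2.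
-/

open Matrix

theorem IsPrimitiveRoot.pow_eq_neg_one {R : Type*} [CommRing R] [NoZeroDivisors R] {ζ : R}
    {k : ℕ} (h : IsPrimitiveRoot ζ (2 * k)) (hk : k ≠ 0) : ζ ^ k = -1 := by
  have h2 : IsPrimitiveRoot (ζ ^ k) 2 := by
    simpa [Nat.mul_div_cancel _ (Nat.pos_of_ne_zero hk)] using h.pow_of_dvd hk (dvd_mul_left k 2)
  exact h2.eq_neg_one_of_two_right

section ZModPow

variable {G : Type*} [Group G] {a : G} {N : ℕ}

theorem pow_zmod_val_natCast (ha : a ^ N = 1) (k : ℕ) : a ^ (k : ZMod N).val = a ^ k := by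
  rw [ZMod.val_natCast, ← pow_eq_pow_mod _ ha]

variable [NeZero N]

theorem pow_zmod_val_add (ha : a ^ N = 1) (u v : ZMod N) :
    a ^ (u + v).val = a ^ u.val * a ^ v.val := by
  rw [ZMod.val_add, ← pow_eq_pow_mod _ ha, pow_add]

theorem pow_zmod_val_neg (ha : a ^ N = 1) (u : ZMod N) : a ^ (-u).val = (a ^ u.val)⁻¹ :=
  eq_inv_of_mul_eq_one_left <| by
    rw [← pow_zmod_val_add ha, neg_add_cancel, ZMod.val_zero, pow_zero]

end ZModPow

namespace QuaternionGroup

variable {G : Type*} [Group G] {n : ℕ} [NeZero n] {a x : G}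

def lift (ha : a ^ (2 * n) = 1) (hx : x * x = a ^ n) (hax : a * x * a = x) :
    QuaternionGroup n →* G where
  toFun
    | .a j => a ^ j.val
    | .xa j => x * a ^ j.val
  map_one' := show a ^ (0 : ZMod (2 * n)).val = 1 by rw [ZMod.val_zero, pow_zero]
  map_mul' := by
    have hsemi : SemiconjBy x a⁻¹ a := by
      rw [SemiconjBy, mul_inv_eq_iff_eq_mul, hax]
    have hconj (u : ZMod (2 * n)) : a ^ u.val * x = x * a ^ (-u).val := by
      rw [pow_zmod_val_neg ha, ← inv_pow]
      exact (hsemi.pow_right u.val).symm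
    rintro (u | u) (v | v)
    · exact pow_zmod_val_add ha u v
    · show x * a ^ (v - u).val = a ^ u.val * (x * a ^ v.val)
      rw [← mul_assoc, hconj, mul_assoc, ← pow_zmod_val_add ha, neg_add_eq_sub]
    · show x * a ^ (u + v).val = x * a ^ u.val * a ^ v.val
      rw [mul_assoc, pow_zmod_val_add ha]
    · show a ^ ((n : ZMod (2 * n)) + v - u).val = x * a ^ u.val * (x * a ^ v.val)
      rw [mul_assoc, ← mul_assoc (a ^ u.val), hconj, ← mul_assoc, ← mul_assoc, hx, mul_assoc,
        ← pow_zmod_val_add ha, ← pow_zmod_val_natCast ha n, ← pow_zmod_val_add ha,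
        neg_add_eq_sub, add_sub_assoc]

variable (ha : a ^ (2 * n) = 1) (hx : x * x = a ^ n) (hax : a * x * a = x)

@[simp]
theorem lift_a (j : ZMod (2 * n)) : lift ha hx hax (.a j) = a ^ j.val := rfl

@[simp]
theorem lift_xa (j : ZMod (2 * n)) : lift ha hx hax (.xa j) = x * a ^ j.val := rfl

theorem range_lift : (lift ha hx hax).range = Subgroup.closure {a, x} := by
  have ha_mem : a ∈ Subgroup.closure {a, x} := Subgroup.subset_closure (by simp)
  have hx_mem : x ∈ Subgroup.closure {a, x} := Subgroup.subset_closure (by simp)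
  apply le_antisymm
  · rintro _ ⟨j | j, rfl⟩
    · exact Subgroup.pow_mem _ ha_mem _
    · exact Subgroup.mul_mem _ hx_mem (Subgroup.pow_mem _ ha_mem _)
  · rw [Subgroup.closure_le]
    rintro _ (rfl | rfl)
    · refine ⟨.a ((1 : ℕ) : ZMod (2 * n)), ?_⟩
      rw [lift_a, pow_zmod_val_natCast ha, pow_one]
    · exact ⟨.xa 0, by rw [lift_xa, ZMod.val_zero, pow_zero, mul_one]⟩

end QuaternionGroup

theorem Subgroup.card_sup_range_mul_card_comap {G K : Type*} [Group G] [Group K]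
    {Z : Subgroup G} (hZ : Z ≤ Subgroup.center G) (f : K →* G) :
    Nat.card ↥(Z ⊔ f.range) * Nat.card (Z.comap f) = Nat.card Z * Nat.card K := by
  have comm (z : Z) (k : K) : Commute (Z.subtype z) (f k) :=
    (Subgroup.mem_center_iff.mp (hZ z.2) (f k)).symm
  let F := Z.subtype.noncommCoprod f comm
  have mem_ker {p : Z × K} : p ∈ F.ker ↔ f p.2 = (p.1 : G)⁻¹ := mul_eq_one_iff_eq_inv'
  let e : F.ker ≃ Z.comap f :=
    { toFun := fun p =>
        ⟨p.1.2, by rw [Subgroup.mem_comap, mem_ker.mp p.2]; exact Z.inv_mem p.1.1.2⟩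
      invFun := fun k ↦ ⟨(⟨(f k)⁻¹, Z.inv_mem k.2⟩, k), mem_ker.mpr (inv_inv _).symm⟩
      left_inv := fun p ↦ by
        ext
        · simp [mem_ker.mp p.2]
        · rfl
      right_inv := fun k ↦ rfl }
  have hrange : F.range = Z ⊔ f.range := by
    rw [MonoidHom.noncommCoprod_range, Subgroup.range_subtype]
  rw [← Nat.card_congr e, ← hrange, ← Subgroup.index_ker, mul_comm, Subgroup.card_mul_index,
    Nat.card_prod]

namespace Matrix.GeneralLinearGroup

variable {R : Type*} [CommRing R] {g : GL (Fin 2) R} {a b : R}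

theorem val_pow_of_val_eq_diag (hg : (g : Matrix (Fin 2) (Fin 2) R) = !![a, 0; 0, b]) (k : ℕ) :
    ((g ^ k : GL (Fin 2) R) : Matrix (Fin 2) (Fin 2) R) = !![a ^ k, 0; 0, b ^ k] := by
  have hdiag (c d : R) : !![c, 0; 0, d] = diagonal ![c, d] := by simp [diagonal_fin_two]
  rw [Units.val_pow_eq_pow_val, hg, hdiag, diagonal_pow, hdiag]
  congr 1
  ext j
  fin_cases j <;> rfl

theorem pow_eq_one_of_val_eq_diag (hg : (g : Matrix (Fin 2) (Fin 2) R) = !![a, 0; 0, b]) {k : ℕ}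
    (ha : a ^ k = 1) (hb : b ^ k = 1) : g ^ k = 1 := by
  ext : 1
  rw [val_pow_of_val_eq_diag hg, ha, hb, Units.val_one, one_fin_two]

theorem pow_eq_neg_one_of_val_eq_diag (hg : (g : Matrix (Fin 2) (Fin 2) R) = !![a, 0; 0, b])
    {k : ℕ} (ha : a ^ k = -1) (hb : b ^ k = -1) : g ^ k = -1 := by
  ext i j
  fin_cases i <;> fin_cases j <;> simp [val_pow_of_val_eq_diag hg, ha, hb]

theorem orderOf_eq_of_val_eq_diag (hg : (g : Matrix (Fin 2) (Fin 2) R) = !![a, 0; 0, b])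
    {k : ℕ} (ha : IsPrimitiveRoot a k) (hb : b ^ k = 1) : orderOf g = k := by
  refine Nat.dvd_antisymm (orderOf_dvd_of_pow_eq_one
    (pow_eq_one_of_val_eq_diag hg ha.pow_eq_one hb)) (ha.dvd_of_pow_eq_one _ ?_)
  have h := congrArg (fun h : GL (Fin 2) R => h.val 0 0) (pow_orderOf_eq_one g)
  simpa only [val_pow_of_val_eq_diag hg, Units.val_one, of_apply, cons_val', cons_val_zero,
    empty_val', cons_val_fin_one, one_apply_eq] using h

theorem mem_center_of_val_eq_scalar {c : R}
    (hg : (g : Matrix (Fin 2) (Fin 2) R) = !![c, 0; 0, c]) : g ∈ Subgroup.center (GL (Fin 2) R) :=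
  mem_center_iff_val_mem_range_scalar.mpr
    ⟨c, by rw [hg]; ext j k; fin_cases j <;> fin_cases k <;> rfl⟩

theorem mul_self_eq_neg_one_of_val_eq_antidiag {h : GL (Fin 2) R}
    (hh : (h : Matrix (Fin 2) (Fin 2) R) = !![0, a; b, 0]) (hab : a * b = -1) : h * h = -1 := by
  ext j k
  fin_cases j <;> fin_cases k <;> simp [hh, hab, mul_comm b]

theorem diag_mul_antidiag_mul_diag {R : Type*} [Field R] {g h : GL (Fin 2) R} {a b c : R}
    (ha : a ≠ 0) (hg : (g : Matrix (Fin 2) (Fin 2) R) = !![a, 0; 0, a⁻¹])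
    (hh : (h : Matrix (Fin 2) (Fin 2) R) = !![0, b; c, 0]) : g * h * g = h := by
  ext j k
  fin_cases j <;> fin_cases k <;> simp [hg, hh] <;> field_simp

end Matrix.GeneralLinearGroup

namespace QuaternionGroup

open Matrix.GeneralLinearGroup

variable {R : Type*} [Field R] {q : ℕ} [NeZero q] {ε b c : R} {ψ τ : GL (Fin 2) R}

theorem eq_one_or_eq_a_of_lift_mem_center (hε : IsPrimitiveRoot ε (2 * q)) (hc : c ≠ 0)
    (hψ : (ψ : Matrix (Fin 2) (Fin 2) R) = !![ε, 0; 0, ε⁻¹])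
    (hτ : (τ : Matrix (Fin 2) (Fin 2) R) = !![0, b; c, 0])
    (hψ2q : ψ ^ (2 * q) = 1) (hττ : τ * τ = ψ ^ q) (hψτψ : ψ * τ * ψ = τ)
    {g : QuaternionGroup q} (hg : lift hψ2q hττ hψτψ g ∈ Subgroup.center (GL (Fin 2) R)) :
    g = 1 ∨ g = a q := by
  obtain ⟨s, hs⟩ := mem_center_iff_val_mem_range_scalar.mp hg
  have hε0 : ε ≠ 0 := hε.ne_zero (NeZero.ne _)
  rcases g with j | j
  · have h00 := congrFun (congrFun hs 0) 0
    have h11 := congrFun (congrFun hs 1) 1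
    simp only [scalar_apply, diagonal_apply_eq, lift_a, val_pow_of_val_eq_diag hψ, of_apply,
      cons_val', cons_val_zero, cons_val_fin_one, cons_val_one] at h00 h11
    have hsq : ε ^ j.val * ε ^ j.val = 1 := by
      calc ε ^ j.val * ε ^ j.val = ε ^ j.val * ε⁻¹ ^ j.val := by rw [← h00, h11]
      _ = 1 := by rw [← mul_pow, mul_inv_cancel₀ hε0, one_pow]
    rcases mul_self_eq_one_iff.mp hsq with h | h
    · left
      rw [one_def, ← (ZMod.val_eq_zero j).mp
        (hε.pow_inj (ZMod.val_lt j) (NeZero.pos _) (h.trans (pow_zero ε).symm))]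
    · right
      have hjq : j.val = q := hε.pow_inj (ZMod.val_lt j) (by have := NeZero.pos q; omega)
        (h.trans (hε.pow_eq_neg_one (NeZero.ne q)).symm)
      rw [← ZMod.natCast_zmod_val j, hjq]
  · have h10 := congrFun (congrFun hs 1) 0
    simp [Units.val_mul, hτ, val_pow_of_val_eq_diag hψ, hc, hε0] at h10

theorem card_comap_lift_of_le_center (hε : IsPrimitiveRoot ε (2 * q)) (hc : c ≠ 0)
    (hψ : (ψ : Matrix (Fin 2) (Fin 2) R) = !![ε, 0; 0, ε⁻¹])
    (hτ : (τ : Matrix (Fin 2) (Fin 2) R) = !![0, b; c, 0])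
    (hψ2q : ψ ^ (2 * q) = 1) (hττ : τ * τ = ψ ^ q) (hψτψ : ψ * τ * ψ = τ)
    {Z : Subgroup (GL (Fin 2) R)} (hZ : Z ≤ Subgroup.center (GL (Fin 2) R))
    (hψq : ψ ^ q ∈ Z) :
    Nat.card (Z.comap (lift hψ2q hττ hψτψ)) = 2 := by
  have hcomap : (Z.comap (lift hψ2q hττ hψτψ) : Set (QuaternionGroup q)) = {1, a q} := by
    ext g
    simp only [SetLike.mem_coe, Subgroup.mem_comap, Set.mem_insert_iff, Set.mem_singleton_iff]
    refine ⟨fun hg ↦ eq_one_or_eq_a_of_lift_mem_center hε hc hψ hτ hψ2q hττ hψτψ (hZ hg), ?_⟩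
    rintro (rfl | rfl)
    · exact (lift hψ2q hττ hψτψ).map_one ▸ Z.one_mem
    · rwa [lift_a, pow_zmod_val_natCast hψ2q]
  rw [← SetLike.coe_sort_coe, hcomap, Nat.card_coe_set_eq, Set.ncard_pair]
  rw [one_def, Ne, a.injEq, eq_comm, ← ZMod.val_eq_zero, ZMod.val_natCast_of_lt]
  · exact NeZero.ne q
  · have := NeZero.pos q
    omega

end QuaternionGroup

open Matrix.GeneralLinearGroup QuaternionGroup

theorem stmt13_general (n q : ℕ) (hq : 1 < q) (hn : q < n) (ε i ω : ℂ)
    (hε : IsPrimitiveRoot ε (2 * q)) (hi : IsPrimitiveRoot i 4)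
    (hω : IsPrimitiveRoot ω (2 * (n - q)))
    (ψ τ φ : GL (Fin 2) ℂ)
    (hψ : (ψ : Matrix (Fin 2) (Fin 2) ℂ) = !![ε, 0; 0, ε⁻¹])
    (hτ : (τ : Matrix (Fin 2) (Fin 2) ℂ) = !![0, i; i, 0])
    (hφ : (φ : Matrix (Fin 2) (Fin 2) ℂ) = !![ω, 0; 0, ω]) :
    Finite (Subgroup.closure {ψ, τ, φ} : Subgroup (GL (Fin 2) ℂ)) ∧
      Nat.card (Subgroup.closure {ψ, τ, φ} : Subgroup (GL (Fin 2) ℂ)) =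
        4 * (n - q) * q := by
  have : NeZero q := ⟨by omega⟩
  have hψ2q : ψ ^ (2 * q) = 1 :=
    pow_eq_one_of_val_eq_diag hψ hε.pow_eq_one (by rw [inv_pow, hε.pow_eq_one, inv_one])
  have hεq : ε ^ q = -1 := hε.pow_eq_neg_one (NeZero.ne q)
  have hψq : ψ ^ q = -1 :=
    pow_eq_neg_one_of_val_eq_diag hψ hεq (by rw [inv_pow, hεq, inv_neg, inv_one])
  have hωm : ω ^ (n - q) = -1 := hω.pow_eq_neg_one (by omega)
  have hφm : φ ^ (n - q) = -1 := pow_eq_neg_one_of_val_eq_diag hφ hωm hωm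
  have hττ : τ * τ = ψ ^ q := hψq ▸ mul_self_eq_neg_one_of_val_eq_antidiag hτ
    (by rw [← sq]; exact (hi : IsPrimitiveRoot i (2 * 2)).pow_eq_neg_one two_ne_zero)
  have hψτψ : ψ * τ * ψ = τ := diag_mul_antidiag_mul_diag (hε.ne_zero (NeZero.ne _)) hψ hτ
  have hZ := Subgroup.zpowers_le.mpr (mem_center_of_val_eq_scalar hφ)
  have hgens :
      Subgroup.closure {ψ, τ, φ} = Subgroup.zpowers φ ⊔ Subgroup.closure {ψ, τ} := by
    rw [Subgroup.zpowers_eq_closure, ← Subgroup.closure_union]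
    congr 1
    ext
    simp only [Set.mem_insert_iff, Set.mem_union, Set.mem_singleton_iff]
    tauto
  have hcard := Subgroup.card_sup_range_mul_card_comap hZ (lift hψ2q hττ hψτψ)
  rw [card_comap_lift_of_le_center hε (hi.ne_zero (by norm_num)) hψ hτ hψ2q hττ hψτψ hZ
      (hψq ▸ hφm ▸ Subgroup.npow_mem_zpowers φ _), range_lift, ← hgens, Nat.card_zpowers,
    orderOf_eq_of_val_eq_diag hφ hω hω.pow_eq_one,
    Nat.card_eq_fintype_card (α := QuaternionGroup q), QuaternionGroup.card] at hcard
  have hcard' : Nat.card (Subgroup.closure {ψ, τ, φ}) = 4 * (n - q) * q := by linarith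
  exact ⟨Nat.finite_of_card_ne_zero (by simp only [hcard', ne_eq, mul_eq_zero]; omega), hcard'⟩

theorem stmt13 (n q : ℕ) (hq : 1 < q) (hn : q < n) (hcop : Nat.Coprime n q)
    (hodd : Odd (n - q)) (ε i ω : ℂ)
    (hε : IsPrimitiveRoot ε (2 * q)) (hi : IsPrimitiveRoot i 4)
    (hω : IsPrimitiveRoot ω (2 * (n - q)))
    (ψ τ φ : GL (Fin 2) ℂ)
    (hψ : (ψ : Matrix (Fin 2) (Fin 2) ℂ) = !![ε, 0; 0, ε⁻¹])
    (hτ : (τ : Matrix (Fin 2) (Fin 2) ℂ) = !![0, i; i, 0])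
    (hφ : (φ : Matrix (Fin 2) (Fin 2) ℂ) = !![ω, 0; 0, ω]) :
    Finite (Subgroup.closure {ψ, τ, φ} : Subgroup (GL (Fin 2) ℂ)) ∧
      Nat.card (Subgroup.closure {ψ, τ, φ} : Subgroup (GL (Fin 2) ℂ)) =
        4 * (n - q) * q :=
  stmt13_general n q hq hn ε i ω hε hi hω ψ τ φ hψ hτ hφ
end

section
/- Let 1 < q < n be coprime with n−q odd, let 𝔻_{n,q} ≤ GL(2,ℂ) be generated by ψ_{2q} = diag(ε,ε^{−1}), τ = [[0,i],[i,0]], φ = diag(ω,ω) as above, and for 1 ≤ t ≤ q−1 let ρ_t : 𝔻_{n,q} → GL(2,ℂ) be the representation determined by ψ_{2q} ↦ diag(ε^t, ε^{−t}), τ ↦ [[0, i^t],[i^t, 0]], φ ↦ diag(ω^t, ω^t). Then ρ_t is an irreducible representation of 𝔻_{n,q}. -/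
open Matrix

lemma mv_diag17 (a b : ℂ) (v : Fin 2 → ℂ) :
    Matrix.mulVec !![a, 0; 0, b] v = ![a * v 0, b * v 1] := by
  funext j; fin_cases j <;>
    simp [Matrix.mulVec, dotProduct, Fin.sum_univ_two]

lemma mv_anti17 (c : ℂ) (v : Fin 2 → ℂ) :
    Matrix.mulVec !![0, c; c, 0] v = ![c * v 1, c * v 0] := by
  funext j; fin_cases j <;>
    simp [Matrix.mulVec, dotProduct, Fin.sum_univ_two]

lemma top17 (W : Submodule ℂ (Fin 2 → ℂ)) (h0 : ![(1:ℂ), 0] ∈ W)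
    (h1 : ![(0:ℂ), 1] ∈ W) : W = ⊤ := by
  rw [Submodule.eq_top_iff']
  intro x
  have hx : x = x 0 • ![(1:ℂ), 0] + x 1 • ![(0:ℂ), 1] := by
    funext j; fin_cases j <;> simp
  rw [hx]
  exact W.add_mem (W.smul_mem _ h0) (W.smul_mem _ h1)

theorem stmt17 (n q : ℕ) (hq : 1 < q) (hn : q < n) (hcop : Nat.Coprime n q)
    (hodd : Odd (n - q)) (ε i ω : ℂ)
    (hε : IsPrimitiveRoot ε (2 * q)) (hi : IsPrimitiveRoot i 4)
    (hω : IsPrimitiveRoot ω (2 * (n - q)))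
    (ψ τ φ : GL (Fin 2) ℂ)
    (hψ : (ψ : Matrix (Fin 2) (Fin 2) ℂ) = !![ε, 0; 0, ε⁻¹])
    (hτ : (τ : Matrix (Fin 2) (Fin 2) ℂ) = !![0, i; i, 0])
    (hφ : (φ : Matrix (Fin 2) (Fin 2) ℂ) = !![ω, 0; 0, ω])
    (t : ℕ) (ht1 : 1 ≤ t) (ht2 : t ≤ q - 1)
    (G : Subgroup (GL (Fin 2) ℂ)) (hG : G = Subgroup.closure {ψ, τ, φ})
    (hψG : ψ ∈ G) (hτG : τ ∈ G) (hφG : φ ∈ G)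
    (ρ : G →* GL (Fin 2) ℂ)
    (hρψ : ((ρ ⟨ψ, hψG⟩ : GL (Fin 2) ℂ) : Matrix (Fin 2) (Fin 2) ℂ) =
      !![ε ^ t, 0; 0, (ε ^ t)⁻¹])
    (hρτ : ((ρ ⟨τ, hτG⟩ : GL (Fin 2) ℂ) : Matrix (Fin 2) (Fin 2) ℂ) =
      !![0, i ^ t; i ^ t, 0])
    (hρφ : ((ρ ⟨φ, hφG⟩ : GL (Fin 2) ℂ) : Matrix (Fin 2) (Fin 2) ℂ) =
      !![ω ^ t, 0; 0, ω ^ t]) :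
    ∀ W : Submodule ℂ (Fin 2 → ℂ),
      (∀ g : G, ∀ v ∈ W,
        Matrix.mulVec ((ρ g : GL (Fin 2) ℂ) : Matrix (Fin 2) (Fin 2) ℂ) v ∈ W) →
      W = ⊥ ∨ W = ⊤ := by
  intro W hW
  rcases eq_or_ne W ⊥ with hbot | hbot
  · exact Or.inl hbot
  · right
    obtain ⟨v, hvW, hv0⟩ := Submodule.exists_mem_ne_zero_of_ne_bot hbot
    set a : ℂ := ε ^ t with ha
    set c : ℂ := i ^ t with hc
    have hεne : ε ≠ 0 := hε.ne_zero (by omega)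
    have ha0 : a ≠ 0 := pow_ne_zero _ hεne
    have hc0 : c ≠ 0 := pow_ne_zero _ (hi.ne_zero (by norm_num))
    have hane : a ≠ a⁻¹ := by
      intro h
      have haa : a * a = 1 := by
        nth_rewrite 2 [h]
        exact mul_inv_cancel₀ ha0
      have h2 : ε ^ (t + t) = 1 := by
        rw [pow_add]; exact haa
      have hdvd : 2 * q ∣ t + t := hε.pow_eq_one_iff_dvd _ |>.mp h2
      have := Nat.le_of_dvd (by omega) hdvd
      omega
    -- application of ψ and τ
    have hψv : ∀ u ∈ W, ![a * u 0, a⁻¹ * u 1] ∈ W := by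
      intro u hu
      have := hW ⟨ψ, hψG⟩ u hu
      rwa [hρψ, mv_diag17] at this
    have hτv : ∀ u ∈ W, ![c * u 1, c * u 0] ∈ W := by
      intro u hu
      have := hW ⟨τ, hτG⟩ u hu
      rwa [hρτ, mv_anti17] at this
    -- step: e0 ∈ W → e1 ∈ W, and conversely
    have he01 : ![(1:ℂ), 0] ∈ W → ![(0:ℂ), 1] ∈ W := by
      intro h
      have h1 := hτv _ h
      simp only [Matrix.cons_val_zero, Matrix.cons_val_one, Matrix.head_cons,
        mul_zero, mul_one] at h1
      have := W.smul_mem c⁻¹ h1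
      have heq : c⁻¹ • ![(0:ℂ), c] = ![(0:ℂ), 1] := by
        funext j; fin_cases j <;> simp [inv_mul_cancel₀ hc0]
      rwa [heq] at this
    have he10 : ![(0:ℂ), 1] ∈ W → ![(1:ℂ), 0] ∈ W := by
      intro h
      have h1 := hτv _ h
      simp only [Matrix.cons_val_zero, Matrix.cons_val_one, Matrix.head_cons,
        mul_zero, mul_one] at h1
      have := W.smul_mem c⁻¹ h1
      have heq : c⁻¹ • ![c, (0:ℂ)] = ![(1:ℂ), 0] := by
        funext j; fin_cases j <;> simp [inv_mul_cancel₀ hc0]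
      rwa [heq] at this
    -- main case analysis
    rcases eq_or_ne (v 0) 0 with h0 | h0
    · -- v 1 ≠ 0
      have h1 : v 1 ≠ 0 := by
        intro h1
        apply hv0
        funext j; fin_cases j <;> simp [h0, h1]
      have he1 : ![(0:ℂ), 1] ∈ W := by
        have := W.smul_mem (v 1)⁻¹ hvW
        have heq : (v 1)⁻¹ • v = ![(0:ℂ), 1] := by
          funext j; fin_cases j <;> simp [h0, inv_mul_cancel₀ h1]
        rwa [heq] at this
      exact top17 W (he10 he1) he1
    · rcases eq_or_ne (v 1) 0 with h1 | h1
      · have he0 : ![(1:ℂ), 0] ∈ W := by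
          have := W.smul_mem (v 0)⁻¹ hvW
          have heq : (v 0)⁻¹ • v = ![(1:ℂ), 0] := by
            funext j; fin_cases j <;> simp [h1, inv_mul_cancel₀ h0]
          rwa [heq] at this
        exact top17 W he0 (he01 he0)
      · -- both coordinates nonzero
        have hw : ![a * v 0, a⁻¹ * v 1] ∈ W := hψv v hvW
        have hd : (a - a⁻¹) ≠ 0 := sub_ne_zero.mpr hane
        have hu0 : ![(a - a⁻¹) * v 0, 0] ∈ W := by
          have := W.sub_mem hw (W.smul_mem a⁻¹ hvW)
          have heq : ![a * v 0, a⁻¹ * v 1] - a⁻¹ • v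
              = ![(a - a⁻¹) * v 0, 0] := by
            funext j; fin_cases j <;> simp <;> ring
          rwa [heq] at this
        have hu1 : ![(0:ℂ), (a - a⁻¹) * v 1] ∈ W := by
          have := W.sub_mem (W.smul_mem a hvW) hw
          have heq : a • v - ![a * v 0, a⁻¹ * v 1]
              = ![(0:ℂ), (a - a⁻¹) * v 1] := by
            funext j; fin_cases j <;> simp <;> ring
          rwa [heq] at this
        have he0 : ![(1:ℂ), 0] ∈ W := by
          have := W.smul_mem ((a - a⁻¹) * v 0)⁻¹ hu0
          have heq : ((a - a⁻¹) * v 0)⁻¹ • ![(a - a⁻¹) * v 0, (0:ℂ)]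
              = ![(1:ℂ), 0] := by
            funext j; fin_cases j <;> simp <;>
              rw [← _root_.mul_inv_rev, inv_mul_cancel₀ (mul_ne_zero hd h0)]
          rwa [heq] at this
        have he1 : ![(0:ℂ), 1] ∈ W := by
          have := W.smul_mem ((a - a⁻¹) * v 1)⁻¹ hu1
          have heq : ((a - a⁻¹) * v 1)⁻¹ • ![(0:ℂ), (a - a⁻¹) * v 1]
              = ![(0:ℂ), 1] := by
            funext j; fin_cases j <;> simp <;>
              rw [← _root_.mul_inv_rev, inv_mul_cancel₀ (mul_ne_zero hd h1)]
          rwa [heq] at this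
        exact top17 W he0 he1
end
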